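/- Let h be a positive definite singular hermitian inner product on a finite-dimensional complex vector space V. Then for every v ∈ V one has the biduality formula |v|_h = sup{ |f(v)| : f ∈ V*, |f|_{h*} ≤ 1 } (both sides taking values in [0,+∞]). -/

import Mathlib

noncomputable section

open MeasureTheory ENNReal Metric Complex Filter Classical

/-- A singular hermitian inner product on a complex vector space `V`: a length function
`V → [0,+∞]` satisfying homogeneity, the triangle inequality and the parallelogram law. -/
structure SingularHermitianInnerProduct (V : Type*) [AddCommGroup V] [Module ℂ V] where
  norm : V → ℝ≥0∞
  norm_zero : norm 0 = 0
  norm_smul : ∀ c : ℂ, c ≠ 0 → ∀ v : V, norm (c • v) = ENNReal.ofReal ‖c‖ * norm v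
  triangle : ∀ v w : V, norm (v + w) ≤ norm v + norm w
  parallelogram : ∀ v w : V,
    norm (v + w) ^ 2 + norm (v - w) ^ 2 = 2 * norm v ^ 2 + 2 * norm w ^ 2

namespace SingularHermitianInnerProduct

variable {V : Type*} [AddCommGroup V] [Module ℂ V]

/-- `h` is positive definite if only `0` has length zero. -/
def PosDef (h : SingularHermitianInnerProduct V) : Prop := ∀ v : V, h.norm v = 0 → v = 0

/-- `h` is finite if no vector has infinite length. -/
def Finite (h : SingularHermitianInnerProduct V) : Prop := ∀ v : V, h.norm v ≠ ⊤

/-- The dual length function on linear functionals (evaluated here on plain functions):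
`|f|_{h*} = sup { |f v| / |v|_h : |v|_h ≠ 0 }`, where a fraction with denominator `+∞` is
zero, and with the convention that if every vector has length `0` then `|f|_{h*}` is `0`
for `f = 0` and `+∞` otherwise. -/
def dualNorm (h : SingularHermitianInnerProduct V) (f : V → ℂ) : ℝ≥0∞ :=
  if ∀ v : V, h.norm v = 0 then (if ∀ v : V, f v = 0 then 0 else ⊤)
  else ⨆ v : {v : V // h.norm v ≠ 0}, ENNReal.ofReal ‖f v.1‖ / h.norm v.1

lemma norm_neg' (h : SingularHermitianInnerProduct V) (v : V) : h.norm (-v) = h.norm v := by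
  have := h.norm_smul (-1) (by norm_num) v
  simpa using this

/-- The subspace of finite-length vectors. -/
def finSub (h : SingularHermitianInnerProduct V) : Submodule ℂ V where
  carrier := {w | h.norm w ≠ ⊤}
  zero_mem' := by simp [h.norm_zero]
  add_mem' := by
    intro a b ha hb
    have := h.triangle a b
    exact ne_top_of_le_ne_top (ENNReal.add_ne_top.2 ⟨ha, hb⟩) this
  smul_mem' := by
    intro c w hw
    by_cases hc : c = 0
    · simp [hc, h.norm_zero]
    · rw [Set.mem_setOf_eq, h.norm_smul c hc]
      exact ENNReal.mul_ne_top ENNReal.ofReal_ne_top hw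

/-- The induced real-valued additive group norm on the subspace of finite-length vectors. -/
def finAddGroupNorm (h : SingularHermitianInnerProduct V) (hh : h.PosDef) :
    AddGroupNorm h.finSub where
  toFun w := (h.norm w.1).toReal
  map_zero' := by simp [h.norm_zero]
  add_le' a b := by
    have hab : h.norm (a.1 + b.1) ≤ h.norm a.1 + h.norm b.1 := h.triangle a.1 b.1
    have h1 : h.norm a.1 + h.norm b.1 ≠ ⊤ := ENNReal.add_ne_top.2 ⟨a.2, b.2⟩
    calc (h.norm ((a + b : h.finSub) : V)).toReal
        ≤ (h.norm a.1 + h.norm b.1).toReal := ENNReal.toReal_mono h1 hab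
      _ = (h.norm a.1).toReal + (h.norm b.1).toReal := ENNReal.toReal_add a.2 b.2
  neg' a := by
    show (h.norm (-a.1)).toReal = (h.norm a.1).toReal
    rw [h.norm_neg']
  eq_zero_of_map_eq_zero' a ha := by
    have : h.norm a.1 = 0 := by
      rcases (ENNReal.toReal_eq_zero_iff _).1 ha with h0 | h0
      · exact h0
      · exact absurd h0 a.2
    exact Subtype.ext (hh a.1 this)

end SingularHermitianInnerProduct

open SingularHermitianInnerProduct

section Aux

variable {V : Type*} [AddCommGroup V] [Module ℂ V]

/-- If `ofReal ‖f w‖ ≤ h.norm w` for all `w`, then the dual norm of `f` is at most `1`,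
provided not every vector has length zero. -/
lemma dualNorm_le_one (h : SingularHermitianInnerProduct V) (f : V →ₗ[ℂ] ℂ)
    (hnd : ¬ ∀ w : V, h.norm w = 0)
    (hb : ∀ w : V, ENNReal.ofReal ‖f w‖ ≤ h.norm w) : h.dualNorm f ≤ 1 := by
  rw [dualNorm, if_neg hnd]
  refine iSup_le fun w => ?_
  exact ENNReal.div_le_of_le_mul (by simpa [one_mul] using hb w.1)

/-- Conversely, if the dual norm of `f` is at most `1` and `h` is positive definite, then
`ofReal ‖f w‖ ≤ h.norm w` for all `w`. -/
lemma le_of_dualNorm_le_one (h : SingularHermitianInnerProduct V) (hh : h.PosDef)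
    (f : V →ₗ[ℂ] ℂ) (hnd : ¬ ∀ w : V, h.norm w = 0)
    (hf : h.dualNorm f ≤ 1) (w : V) : ENNReal.ofReal ‖f w‖ ≤ h.norm w := by
  rcases eq_or_ne (h.norm w) ⊤ with ht | ht
  · simp [ht]
  rcases eq_or_ne (h.norm w) 0 with h0 | h0
  · have : w = 0 := hh w h0
    simp [this, h0]
  · rw [dualNorm, if_neg hnd] at hf
    have hterm : ENNReal.ofReal ‖f w‖ / h.norm w ≤ 1 :=
      le_trans (le_iSup (fun v : {v : V // h.norm v ≠ 0} =>
        ENNReal.ofReal ‖f v.1‖ / h.norm v.1) ⟨w, h0⟩) hf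
    rw [ENNReal.div_le_iff h0 ht, one_mul] at hterm
    exact hterm

end Aux

/-- For a positive definite singular hermitian inner product `h` on a
finite-dimensional complex vector space `V`, one has the biduality formula
`|v|_h = sup { |f(v)| : f ∈ V*, |f|_{h*} ≤ 1 }` for every `v ∈ V`. -/
theorem biduality_singularHermitian {V : Type*} [AddCommGroup V] [Module ℂ V]
    [FiniteDimensional ℂ V] (h : SingularHermitianInnerProduct V) (hh : h.PosDef)
    (v : V) :
    h.norm v = ⨆ f : {f : V →ₗ[ℂ] ℂ // h.dualNorm f ≤ 1}, ENNReal.ofReal ‖f.1 v‖ := by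
  classical
  by_cases hv0 : v = 0
  · subst hv0
    simp [h.norm_zero]
  have hnd : ¬ ∀ w : V, h.norm w = 0 := fun H => hv0 (hh v (H v))
  -- upper bound for the RHS
  have hub : (⨆ f : {f : V →ₗ[ℂ] ℂ // h.dualNorm f ≤ 1}, ENNReal.ofReal ‖f.1 v‖)
      ≤ h.norm v :=
    iSup_le fun f => le_of_dualNorm_le_one h hh f.1 hnd f.2 v
  refine le_antisymm ?_ hub
  by_cases hfin : h.norm v = ⊤
  · -- infinite case: v ∉ finSub; build functionals vanishing on finSub with big value at v
    rw [hfin]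
    set p := h.finSub with hp
    have hvp : v ∉ p := fun hv => hv hfin
    -- a functional on the quotient with value 1 at the class of v
    set x : V ⧸ p := Submodule.Quotient.mk v with hx
    have hx0 : x ≠ 0 := by
      simpa [hx, Submodule.Quotient.mk_eq_zero] using hvp
    obtain ⟨g, hg⟩ := LinearMap.exists_extend
      ((LinearEquiv.coord ℂ (V ⧸ p) x hx0 : (ℂ ∙ x) ≃ₗ[ℂ] ℂ) : (ℂ ∙ x) →ₗ[ℂ] ℂ)
    set φ : V →ₗ[ℂ] ℂ := g ∘ₗ p.mkQ with hφ
    have hφv : φ v = 1 := by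
      have : g ((ℂ ∙ x).subtype ⟨x, Submodule.mem_span_singleton_self x⟩) =
          LinearEquiv.coord ℂ (V ⧸ p) x hx0 ⟨x, Submodule.mem_span_singleton_self x⟩ :=
        LinearMap.congr_fun hg _
      rw [LinearEquiv.coord_self] at this
      simpa [hφ] using this
    have hφ0 : ∀ w : V, w ∈ p → φ w = 0 := by
      intro w hw
      simp [hφ, (Submodule.Quotient.mk_eq_zero p).2 hw]
    -- each multiple n • φ has dual norm 0
    have hdn : ∀ c : ℂ, h.dualNorm (c • φ) ≤ 1 := by
      intro c
      refine dualNorm_le_one h (c • φ) hnd fun w => ?_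
      by_cases hw : w ∈ p
      · simp [hφ0 w hw]
      · have : h.norm w = ⊤ := not_not.1 hw
        simp [this]
    have key : ∀ n : ℕ, (n : ℝ≥0∞) ≤
        ⨆ f : {f : V →ₗ[ℂ] ℂ // h.dualNorm f ≤ 1}, ENNReal.ofReal ‖f.1 v‖ := by
      intro n
      refine le_trans ?_ (le_iSup (fun f : {f : V →ₗ[ℂ] ℂ // h.dualNorm f ≤ 1} =>
        ENNReal.ofReal ‖f.1 v‖) ⟨(n : ℂ) • φ, hdn n⟩)
      have : ((n : ℂ) • φ) v = (n : ℂ) := by simp [hφv]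
      rw [this]
      simp [ENNReal.ofReal_natCast]
    calc (⊤ : ℝ≥0∞) = ⨆ n : ℕ, (n : ℝ≥0∞) := ENNReal.iSup_natCast.symm
      _ ≤ _ := iSup_le key
  · -- finite case: use Hahn–Banach on the normed space `finSub`
    set p := h.finSub with hp
    have hvp : v ∈ p := hfin
    letI : NormedAddCommGroup p := AddGroupNorm.toNormedAddCommGroup (h.finAddGroupNorm hh)
    have hnorm : ∀ w : p, ‖w‖ = (h.norm w.1).toReal := fun w => rfl
    letI : NormedSpace ℂ p := by
      refine ⟨fun c w => ?_⟩
      by_cases hc : c = 0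
      · simp [hc, hnorm, h.norm_zero]
      · rw [hnorm, hnorm]
        show (h.norm (c • w.1)).toReal ≤ ‖c‖ * (h.norm w.1).toReal
        rw [h.norm_smul c hc, ENNReal.toReal_mul, ENNReal.toReal_ofReal (norm_nonneg c)]
    have hx0 : (⟨v, hvp⟩ : p) ≠ 0 := fun hc => hv0 (by simpa using congrArg Subtype.val hc)
    obtain ⟨g, hg1, hgv⟩ := exists_dual_vector ℂ (⟨v, hvp⟩ : p) (norm_ne_zero_iff.2 hx0)
    obtain ⟨q, hq⟩ := Submodule.exists_isCompl p
    set π : V →ₗ[ℂ] p := p.projectionOnto q hq with hπ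
    set f : V →ₗ[ℂ] ℂ := (g : p →ₗ[ℂ] ℂ) ∘ₗ π with hf
    have hfw : ∀ (w : V) (hw : w ∈ p), f w = g ⟨w, hw⟩ := by
      intro w hw
      simp [hf, hπ, Submodule.projectionOnto_apply_left hq ⟨w, hw⟩]
    have hb : ∀ w : V, ENNReal.ofReal ‖f w‖ ≤ h.norm w := by
      intro w
      by_cases hw : w ∈ p
      · rw [hfw w hw]
        have h1 : ‖g ⟨w, hw⟩‖ ≤ ‖(⟨w, hw⟩ : p)‖ := by
          calc ‖g ⟨w, hw⟩‖ ≤ ‖g‖ * ‖(⟨w, hw⟩ : p)‖ := g.le_opNorm _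
            _ = ‖(⟨w, hw⟩ : p)‖ := by rw [hg1, one_mul]
        calc ENNReal.ofReal ‖g ⟨w, hw⟩‖ ≤ ENNReal.ofReal ‖(⟨w, hw⟩ : p)‖ :=
              ENNReal.ofReal_le_ofReal h1
          _ = ENNReal.ofReal (h.norm w).toReal := by rw [hnorm]
          _ ≤ h.norm w := ENNReal.ofReal_toReal_le
      · have : h.norm w = ⊤ := not_not.1 hw
        simp [this]
    have hdn : h.dualNorm f ≤ 1 := dualNorm_le_one h f hnd hb
    have hval : ENNReal.ofReal ‖f v‖ = h.norm v := by
      rw [hfw v hvp, hgv]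
      rw [RCLike.norm_ofReal, _root_.abs_of_nonneg (norm_nonneg _), hnorm]
      exact ENNReal.ofReal_toReal hfin
    calc h.norm v = ENNReal.ofReal ‖f v‖ := hval.symm
      _ ≤ _ := le_iSup (fun f : {f : V →ₗ[ℂ] ℂ // h.dualNorm f ≤ 1} =>
          ENNReal.ofReal ‖f.1 v‖) ⟨f, hdn⟩
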